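/- Let η = η_x + η_y : F₂ → ℤ, where x ∈ {a, a⁻¹} and y ∈ {b, b⁻¹}. Then for every letter-thin triple (x₁,x₂,x₃): η(x₁) + η(x₂) + η(x₃) ∈ {−1, +1}; in particular |η(x₁) + η(x₂) + η(x₃)| = 1. -/

import Mathlib

/-!
Cancelling a pair `z z⁻¹` does not change a count difference, so `η_x` and `η_y` are
homomorphisms `F₂ → ℤ` and the sum over the triple is `η(x₁x₂x₃)`. The property "`x₁x₂x₃` is
conjugate to one of `a^{±1}, b^{±1}`" is invariant under `∼`: rotating the triple conjugates
the product, the reversal inverts it, and `φ_a`, `φ_b` send letters to letters. For the four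
normal forms the product is a conjugate of `a` or `b`, and `η` of a conjugate of a letter is `±1`.
-/

open FreeGroup

abbrev W : Type := FreeGroup (Fin 2)

/-- The set of alternating words: reduced words whose letters alternate
between the two generators `a` (index 0) and `b` (index 1). -/
def Alt : Set W := {w | List.Chain' (fun p q : Fin 2 × Bool => p.1 ≠ q.1) w.toWord}

/-- The automorphism `φ_a : a ↦ a⁻¹, b ↦ b` of `F₂`. -/
def phiaF : W →* W :=
  FreeGroup.lift (fun i : Fin 2 => if i = 0 then (FreeGroup.of (0 : Fin 2))⁻¹ else FreeGroup.of 1)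

/-- The automorphism `φ_b : a ↦ a, b ↦ b⁻¹` of `F₂`. -/
def phibF : W →* W :=
  FreeGroup.lift (fun i : Fin 2 => if i = 0 then FreeGroup.of 0 else (FreeGroup.of (1 : Fin 2))⁻¹)

/-- Generating moves for the equivalence relation `∼` on triples:
rotation, inversion, and the sign-change automorphisms `φ_a`, `φ_b`. -/
def TripleBase : W × W × W → W × W × W → Prop := fun t t' =>
  t' = (t.2.1, t.2.2, t.1) ∨
  t' = ((t.2.2)⁻¹, (t.2.1)⁻¹, (t.1)⁻¹) ∨
  t' = (phiaF t.1, phiaF t.2.1, phiaF t.2.2) ∨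
  t' = (phibF t.1, phibF t.2.1, phibF t.2.2)

/-- The equivalence relation `∼` on triples of elements of `F₂`. -/
def TripleEquiv : W × W × W → W × W × W → Prop := Relation.EqvGen TripleBase

/-- Form [T1a]: `(c₁⁻¹ a b c₂, c₂⁻¹ b⁻¹ a c₃, c₃⁻¹ a⁻¹ c₁)`, all words reduced. -/
def FormT1a (y₁ y₂ y₃ : W) : Prop :=
  ∃ c₁ c₂ c₃ : W, c₁ ∈ Alt ∧ c₂ ∈ Alt ∧ c₃ ∈ Alt ∧
    y₁.toWord = (c₁⁻¹).toWord ++ [((0 : Fin 2), true), ((1 : Fin 2), true)] ++ c₂.toWord ∧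
    y₂.toWord = (c₂⁻¹).toWord ++ [((1 : Fin 2), false), ((0 : Fin 2), true)] ++ c₃.toWord ∧
    y₃.toWord = (c₃⁻¹).toWord ++ [((0 : Fin 2), false)] ++ c₁.toWord

/-- Form [T1b]: `(c₁⁻¹ b a c₂, c₂⁻¹ a⁻¹ b c₃, c₃⁻¹ b⁻¹ c₁)`, all words reduced. -/
def FormT1b (y₁ y₂ y₃ : W) : Prop :=
  ∃ c₁ c₂ c₃ : W, c₁ ∈ Alt ∧ c₂ ∈ Alt ∧ c₃ ∈ Alt ∧
    y₁.toWord = (c₁⁻¹).toWord ++ [((1 : Fin 2), true), ((0 : Fin 2), true)] ++ c₂.toWord ∧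
    y₂.toWord = (c₂⁻¹).toWord ++ [((0 : Fin 2), false), ((1 : Fin 2), true)] ++ c₃.toWord ∧
    y₃.toWord = (c₃⁻¹).toWord ++ [((1 : Fin 2), false)] ++ c₁.toWord

/-- Form [T2a]: `(c₁⁻¹ b⁻¹ a b c₂, c₂⁻¹ b⁻¹, b c₁)`, all words reduced. -/
def FormT2a (y₁ y₂ y₃ : W) : Prop :=
  ∃ c₁ c₂ : W, c₁ ∈ Alt ∧ c₂ ∈ Alt ∧
    y₁.toWord = (c₁⁻¹).toWord ++
      [((1 : Fin 2), false), ((0 : Fin 2), true), ((1 : Fin 2), true)] ++ c₂.toWord ∧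
    y₂.toWord = (c₂⁻¹).toWord ++ [((1 : Fin 2), false)] ∧
    y₃.toWord = [((1 : Fin 2), true)] ++ c₁.toWord

/-- Form [T2b]: `(c₁⁻¹ a⁻¹ b a c₂, c₂⁻¹ a⁻¹, a c₁)`, all words reduced. -/
def FormT2b (y₁ y₂ y₃ : W) : Prop :=
  ∃ c₁ c₂ : W, c₁ ∈ Alt ∧ c₂ ∈ Alt ∧
    y₁.toWord = (c₁⁻¹).toWord ++
      [((0 : Fin 2), false), ((1 : Fin 2), true), ((0 : Fin 2), true)] ++ c₂.toWord ∧
    y₂.toWord = (c₂⁻¹).toWord ++ [((0 : Fin 2), false)] ∧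
    y₃.toWord = [((0 : Fin 2), true)] ++ c₁.toWord

/-- A triple of alternating words is letter-thin if it is `∼`-equivalent to a triple
of one of the forms [T1a], [T1b], [T2a], [T2b]. -/
def LetterThin (x₁ x₂ x₃ : W) : Prop :=
  x₁ ∈ Alt ∧ x₂ ∈ Alt ∧ x₃ ∈ Alt ∧
  ∃ y₁ y₂ y₃ : W, TripleEquiv (x₁, x₂, x₃) (y₁, y₂, y₃) ∧
    (FormT1a y₁ y₂ y₃ ∨ FormT1b y₁ y₂ y₃ ∨ FormT2a y₁ y₂ y₃ ∨ FormT2b y₁ y₂ y₃)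

/-- The homomorphism `η_x : F₂ → ℤ` counting occurrences of the letter `x = (i,s)`
minus occurrences of its inverse in a reduced word. -/
def etaLetter (i : Fin 2) (s : Bool) (g : W) : ℤ :=
  (g.toWord.count (i, s) : ℤ) - (g.toWord.count (i, !s) : ℤ)

namespace FreeGroup

variable {α : Type*}

lemma mk_cons_cons (x y : α × Bool) (L : List (α × Bool)) :
    mk (x :: y :: L) = mk [x] * mk (y :: L) := rfl

lemma mk_singleton_true (a : α) : mk [(a, true)] = of a := rfl

lemma mk_singleton_false (a : α) : mk [(a, false)] = (of a)⁻¹ := rfl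

section WordBalance

variable [DecidableEq α]

def wordBalance (x : α × Bool) (L : List (α × Bool)) : ℤ :=
  L.count x - L.count (x.1, !x.2)

@[simp]
lemma wordBalance_append (x : α × Bool) (L₁ L₂ : List (α × Bool)) :
    wordBalance x (L₁ ++ L₂) = wordBalance x L₁ + wordBalance x L₂ := by
  simp only [wordBalance, List.count_append]; push_cast; ring

lemma wordBalance_cancel_pair (x : α × Bool) (a : α) (b : Bool) :
    wordBalance x [(a, b), (a, !b)] = 0 := by
  obtain ⟨a', s⟩ := x
  by_cases ha : a = a'
  · subst ha; cases s <;> cases b <;> simp [wordBalance]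
  · simp [wordBalance, ha]

lemma Red.Step.wordBalance_eq {L₁ L₂ : List (α × Bool)} (h : Red.Step L₁ L₂) (x : α × Bool) :
    wordBalance x L₁ = wordBalance x L₂ := by
  obtain @⟨L₁, L₂, a, b⟩ := h
  rw [show L₁ ++ (a, b) :: (a, !b) :: L₂ = L₁ ++ [(a, b), (a, !b)] ++ L₂ by simp]
  simp only [wordBalance_append, wordBalance_cancel_pair, add_zero]

lemma Red.wordBalance_eq {L₁ L₂ : List (α × Bool)} (h : Red L₁ L₂) (x : α × Bool) :
    wordBalance x L₁ = wordBalance x L₂ := by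
  induction h with
  | refl => rfl
  | tail _ hstep ih => exact ih.trans (hstep.wordBalance_eq x)

lemma wordBalance_toWord_mul (x : α × Bool) (g h : FreeGroup α) :
    wordBalance x (g * h).toWord = wordBalance x g.toWord + wordBalance x h.toWord := by
  rw [toWord_mul, ← (reduce.red).wordBalance_eq, wordBalance_append]

lemma IsConj.wordBalance_toWord_eq {g h : FreeGroup α} (hgh : IsConj g h) (x : α × Bool) :
    wordBalance x g.toWord = wordBalance x h.toWord := by
  obtain ⟨c, rfl⟩ := isConj_iff.1 hgh
  have hc : wordBalance x c.toWord + wordBalance x c⁻¹.toWord = 0 := by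
    rw [← wordBalance_toWord_mul, mul_inv_cancel, toWord_one]
    simp [wordBalance]
  rw [wordBalance_toWord_mul, wordBalance_toWord_mul]
  omega

end WordBalance

def IsConjLetter (w : FreeGroup α) : Prop :=
  ∃ x : α × Bool, IsConj (mk [x]) w

lemma IsConjLetter.of_isConj {v w : FreeGroup α} (hv : IsConjLetter v) (h : IsConj v w) :
    IsConjLetter w :=
  let ⟨x, hx⟩ := hv; ⟨x, hx.trans h⟩

lemma IsConjLetter.inv {w : FreeGroup α} (hw : IsConjLetter w) : IsConjLetter w⁻¹ := by
  obtain ⟨⟨a, b⟩, hw⟩ := hw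
  obtain ⟨c, rfl⟩ := isConj_iff.1 hw
  refine ⟨(a, !b), isConj_iff.2 ⟨c, ?_⟩⟩
  rw [show mk [(a, !b)] = (mk [(a, b)])⁻¹ by simp [inv_mk, invRev]]
  group

lemma IsConjLetter.map {β : Type*} (f : FreeGroup α →* FreeGroup β)
    (hf : ∀ a, IsConjLetter (f (of a))) {w : FreeGroup α} (hw : IsConjLetter w) :
    IsConjLetter (f w) := by
  obtain ⟨⟨a, b⟩, hw⟩ := hw
  refine IsConjLetter.of_isConj ?_ (f.map_isConj hw)
  cases b
  · rw [mk_singleton_false, _root_.map_inv]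
    exact (hf a).inv
  · exact hf a

lemma IsConjLetter.map_iff_of_involutive {f : FreeGroup α →* FreeGroup α}
    (hf : ∀ a, IsConjLetter (f (of a))) (hff : Function.Involutive f) {w : FreeGroup α} :
    IsConjLetter (f w) ↔ IsConjLetter w :=
  ⟨fun hw => hff w ▸ hw.map f hf, .map f hf⟩

end FreeGroup

lemma etaLetter_eq_wordBalance (i : Fin 2) (s : Bool) (g : W) :
    etaLetter i s g = wordBalance (i, s) g.toWord := rfl

lemma etaLetter_mul (i : Fin 2) (s : Bool) (g h : W) :
    etaLetter i s (g * h) = etaLetter i s g + etaLetter i s h :=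
  wordBalance_toWord_mul (i, s) g h

lemma etaLetter_add_etaLetter_of_isConjLetter (s t : Bool) {w : W} (hw : IsConjLetter w) :
    etaLetter 0 s w + etaLetter 1 t w = 1 ∨ etaLetter 0 s w + etaLetter 1 t w = -1 := by
  obtain ⟨x, hx⟩ := hw
  have hs := hx.wordBalance_toWord_eq (0, s)
  have ht := hx.wordBalance_toWord_eq (1, t)
  simp only [etaLetter_eq_wordBalance, ← hs, ← ht, toWord_mk, reduce_singleton]
  obtain ⟨i, b⟩ := x
  fin_cases i <;> cases b <;> cases s <;> cases t <;> decide

lemma phiaF_phiaF : Function.Involutive phiaF := fun g => by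
  suffices phiaF.comp phiaF = MonoidHom.id W from DFunLike.congr_fun this g
  refine ext_hom _ _ fun a => ?_
  fin_cases a <;> simp [phiaF]

lemma phibF_phibF : Function.Involutive phibF := fun g => by
  suffices phibF.comp phibF = MonoidHom.id W from DFunLike.congr_fun this g
  refine ext_hom _ _ fun a => ?_
  fin_cases a <;> simp [phibF]

lemma isConjLetter_phiaF_of (a : Fin 2) : IsConjLetter (phiaF (of a)) := by
  fin_cases a
  · exact ⟨(0, false), IsConj.refl _⟩
  · exact ⟨(1, true), IsConj.refl _⟩

lemma isConjLetter_phibF_of (a : Fin 2) : IsConjLetter (phibF (of a)) := by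
  fin_cases a
  · exact ⟨(0, true), IsConj.refl _⟩
  · exact ⟨(1, false), IsConj.refl _⟩

lemma TripleBase.isConjLetter_prod_iff {p q : W × W × W} (h : TripleBase p q) :
    IsConjLetter (p.1 * p.2.1 * p.2.2) ↔ IsConjLetter (q.1 * q.2.1 * q.2.2) := by
  obtain ⟨x₁, x₂, x₃⟩ := p
  rcases h with rfl | rfl | rfl | rfl
  · have h : IsConj (x₁ * x₂ * x₃) (x₂ * x₃ * x₁) := isConj_iff.2 ⟨x₁⁻¹, by group⟩
    exact ⟨(·.of_isConj h), (·.of_isConj h.symm)⟩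
  · have h : x₃⁻¹ * x₂⁻¹ * x₁⁻¹ = (x₁ * x₂ * x₃)⁻¹ := by group
    simp only [h]
    exact ⟨IsConjLetter.inv, fun hw => inv_inv (x₁ * x₂ * x₃) ▸ hw.inv⟩
  · rw [← _root_.map_mul, ← _root_.map_mul]
    exact (IsConjLetter.map_iff_of_involutive isConjLetter_phiaF_of phiaF_phiaF).symm
  · rw [← _root_.map_mul, ← _root_.map_mul]
    exact (IsConjLetter.map_iff_of_involutive isConjLetter_phibF_of phibF_phibF).symm

lemma TripleEquiv.isConjLetter_prod_iff {p q : W × W × W} (h : TripleEquiv p q) :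
    IsConjLetter (p.1 * p.2.1 * p.2.2) ↔ IsConjLetter (q.1 * q.2.1 * q.2.2) := by
  induction h with
  | rel _ _ h => exact h.isConjLetter_prod_iff
  | refl => rfl
  | symm _ _ _ ih => exact ih.symm
  | trans _ _ _ _ _ ih₁ ih₂ => exact ih₁.trans ih₂

lemma isConjLetter_prod_of_form {y₁ y₂ y₃ : W}
    (h : FormT1a y₁ y₂ y₃ ∨ FormT1b y₁ y₂ y₃ ∨ FormT2a y₁ y₂ y₃ ∨ FormT2b y₁ y₂ y₃) :
    IsConjLetter (y₁ * y₂ * y₃) := by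
  rcases h with ⟨c₁, c₂, c₃, -, -, -, h₁, h₂, h₃⟩ | ⟨c₁, c₂, c₃, -, -, -, h₁, h₂, h₃⟩ |
      ⟨c₁, c₂, -, -, h₁, h₂, h₃⟩ | ⟨c₁, c₂, -, -, h₁, h₂, h₃⟩ <;>
    rw [← mk_toWord (x := y₁), ← mk_toWord (x := y₂), ← mk_toWord (x := y₃), h₁, h₂, h₃] <;>
    simp only [← mul_mk, mk_toWord, mk_cons_cons, mk_singleton_true, mk_singleton_false]
  -- the products are `c₁⁻¹ a c₁`, `c₁⁻¹ b c₁`, `c₁⁻¹ b⁻¹ a b c₁` and `c₁⁻¹ a⁻¹ b a c₁`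
  · exact ⟨(0, true), isConj_iff.2 ⟨c₁⁻¹, by simp only [mk_singleton_true]; group⟩⟩
  · exact ⟨(1, true), isConj_iff.2 ⟨c₁⁻¹, by simp only [mk_singleton_true]; group⟩⟩
  · exact ⟨(0, true), isConj_iff.2 ⟨c₁⁻¹ * (of 1)⁻¹, by simp only [mk_singleton_true]; group⟩⟩
  · exact ⟨(1, true), isConj_iff.2 ⟨c₁⁻¹ * (of 0)⁻¹, by simp only [mk_singleton_true]; group⟩⟩

/-- **Proposition.** For `η = η_x + η_y` with `x ∈ {a,a⁻¹}`, `y ∈ {b,b⁻¹}` and every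
letter-thin triple `(x₁,x₂,x₃)` we have `η(x₁) + η(x₂) + η(x₃) ∈ {-1,+1}`. -/
theorem etaLetter_letterThin (s t : Bool) (x₁ x₂ x₃ : W) (h : LetterThin x₁ x₂ x₃) :
    (etaLetter 0 s x₁ + etaLetter 1 t x₁) + (etaLetter 0 s x₂ + etaLetter 1 t x₂) +
      (etaLetter 0 s x₃ + etaLetter 1 t x₃) = 1 ∨
    (etaLetter 0 s x₁ + etaLetter 1 t x₁) + (etaLetter 0 s x₂ + etaLetter 1 t x₂) +
      (etaLetter 0 s x₃ + etaLetter 1 t x₃) = -1 := by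
  obtain ⟨-, -, -, y₁, y₂, y₃, hequiv, hform⟩ := h
  have hprod : IsConjLetter (x₁ * x₂ * x₃) :=
    hequiv.isConjLetter_prod_iff.2 (isConjLetter_prod_of_form hform)
  have hsum := etaLetter_add_etaLetter_of_isConjLetter s t hprod
  simp only [etaLetter_mul] at hsum
  omega
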